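/- arXiv:2107.10559 — 2 statements merged into one kernel-verified Lean document; each statement's English description precedes it below -/
import Mathlib

section
/- The vectors β_1 = α_1 + α_{2l−1}, β_2 = α_2 + α_{2l−2}, …, β_{l−1} = α_{l−1} + α_{l+1}, β_l = α_{l−1} + α_{l+1} + 2α_l, where α_1,…,α_{2l−1} are simple roots of a root system of type A_{2l−1}, form a set of simple roots for a root system of type D_l; in particular their pairwise inner products realize the D_l Cartan matrix: ⟨β_i, β_i⟩ = 4, ⟨β_i, β_{i+1}⟩ = −2 for i ≤ l−2, ⟨β_{l−2}, β_l⟩ = −2, ⟨β_{l−1}, β_l⟩ = 0, and all other pairs are orthogonal. -/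
open Finset

/-- The standard inner product on `ℝ^{2l}`. -/
noncomputable def ip {n : ℕ} (v w : Fin n → ℝ) : ℝ := ∑ i, v i * w i

/-- The standard basis vector `ε_m` (1-indexed: `e m` has a `1` in the `m`-th slot). -/
noncomputable def eps (n m : ℕ) : Fin n → ℝ := fun j => if (j : ℕ) + 1 = m then 1 else 0

/-- The simple roots `α_i = ε_i − ε_{i+1}` of type `A_{2l−1}`, `i = 1,…,2l−1`. -/
noncomputable def rootA (l i : ℕ) : Fin (2 * l) → ℝ := eps (2 * l) i - eps (2 * l) (i + 1)

/-- `β_i = α_i + α_{2l−i}` for `i ≤ l−1` and `β_l = α_{l−1} + α_{l+1} + 2α_l`. -/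
noncomputable def beta (l i : ℕ) : Fin (2 * l) → ℝ :=
  if i = l then rootA l (l - 1) + rootA l (l + 1) + (2 : ℝ) • rootA l l
  else rootA l i + rootA l (2 * l - i)

lemma ip_add_left {n : ℕ} (v w x : Fin n → ℝ) : ip (v + w) x = ip v x + ip w x := by
  simp [ip, add_mul, Finset.sum_add_distrib]

lemma ip_add_right {n : ℕ} (v w x : Fin n → ℝ) : ip x (v + w) = ip x v + ip x w := by
  simp [ip, mul_add, Finset.sum_add_distrib]

lemma ip_sub_left {n : ℕ} (v w x : Fin n → ℝ) : ip (v - w) x = ip v x - ip w x := by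
  simp [ip, sub_mul, Finset.sum_sub_distrib]

lemma ip_sub_right {n : ℕ} (v w x : Fin n → ℝ) : ip x (v - w) = ip x v - ip x w := by
  simp [ip, mul_sub, Finset.sum_sub_distrib]

lemma ip_smul_left {n : ℕ} (r : ℝ) (v x : Fin n → ℝ) : ip (r • v) x = r * ip v x := by
  simp [ip, Finset.mul_sum, mul_assoc]

lemma ip_smul_right {n : ℕ} (r : ℝ) (v x : Fin n → ℝ) : ip x (r • v) = r * ip x v := by
  simp only [ip, Pi.smul_apply, smul_eq_mul, Finset.mul_sum]
  congr 1; ext i; ring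

lemma ip_eps (n a b : ℕ) (ha1 : 1 ≤ a) (ha2 : a ≤ n) (hb1 : 1 ≤ b) (hb2 : b ≤ n) :
    ip (eps n a) (eps n b) = if a = b then 1 else 0 := by
  unfold ip eps
  rcases eq_or_ne a b with rfl | hab
  · rw [if_pos rfl, Finset.sum_eq_single (⟨a - 1, by omega⟩ : Fin n)]
    · have : (a - 1) + 1 = a := by omega
      simp [this]
    · intro j _ hj
      have : (j : ℕ) + 1 ≠ a := by
        intro h
        apply hj
        apply Fin.ext
        simp
        omega
      simp [this]
    · intro h; exact absurd (Finset.mem_univ _) h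
  · rw [if_neg hab, Finset.sum_eq_zero]
    intro j _
    by_cases h : (j : ℕ) + 1 = a
    · simp [h, hab]
    · simp [h]

lemma ipA (l i j : ℕ) (hl : 1 ≤ l) (hi1 : 1 ≤ i) (hi2 : i ≤ 2 * l - 1)
    (hj1 : 1 ≤ j) (hj2 : j ≤ 2 * l - 1) :
    ip (rootA l i) (rootA l j)
      = if i = j then 2 else if i + 1 = j ∨ j + 1 = i then -1 else 0 := by
  unfold rootA
  rw [ip_sub_left, ip_sub_right, ip_sub_right,
    ip_eps _ _ _ hi1 (by omega) hj1 (by omega),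
    ip_eps _ _ _ hi1 (by omega) (by omega) (by omega),
    ip_eps _ _ _ (by omega) (by omega) hj1 (by omega),
    ip_eps _ _ _ (by omega) (by omega) (by omega) (by omega)]
  split_ifs <;> (first | (exfalso; omega) | norm_num)

set_option maxHeartbeats 1000000 in
lemma ipB_small (l i j : ℕ) (hl : 4 ≤ l) (hi1 : 1 ≤ i) (hi2 : i ≤ l - 1)
    (hj1 : 1 ≤ j) (hj2 : j ≤ l - 1) :
    ip (beta l i) (beta l j)
      = if i = j then 4 else if i + 1 = j ∨ j + 1 = i then -2 else 0 := by
  have hi : i ≠ l := by omega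
  have hj : j ≠ l := by omega
  rw [beta, beta, if_neg hi, if_neg hj, ip_add_left, ip_add_right, ip_add_right,
    ipA l i j (by omega) hi1 (by omega) hj1 (by omega),
    ipA l i (2 * l - j) (by omega) hi1 (by omega) (by omega) (by omega),
    ipA l (2 * l - i) j (by omega) (by omega) (by omega) hj1 (by omega),
    ipA l (2 * l - i) (2 * l - j) (by omega) (by omega) (by omega) (by omega) (by omega)]
  split_ifs <;> (first | (exfalso; omega) | norm_num)

lemma ipA_eq (l i : ℕ) (hl : 1 ≤ l) (h1 : 1 ≤ i) (h2 : i ≤ 2 * l - 1) :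
    ip (rootA l i) (rootA l i) = 2 := by
  rw [ipA l i i hl h1 h2 h1 h2, if_pos rfl]

lemma ipA_adj (l i j : ℕ) (hl : 1 ≤ l) (hi1 : 1 ≤ i) (hi2 : i ≤ 2 * l - 1)
    (hj1 : 1 ≤ j) (hj2 : j ≤ 2 * l - 1) (h : i + 1 = j ∨ j + 1 = i) :
    ip (rootA l i) (rootA l j) = -1 := by
  rw [ipA l i j hl hi1 hi2 hj1 hj2, if_neg (by omega), if_pos h]

lemma ipA_far (l i j : ℕ) (hl : 1 ≤ l) (hi1 : 1 ≤ i) (hi2 : i ≤ 2 * l - 1)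
    (hj1 : 1 ≤ j) (hj2 : j ≤ 2 * l - 1) (h1 : ¬ i = j) (h2 : ¬ (i + 1 = j ∨ j + 1 = i)) :
    ip (rootA l i) (rootA l j) = 0 := by
  rw [ipA l i j hl hi1 hi2 hj1 hj2, if_neg h1, if_neg h2]

lemma ipB_mid (l i : ℕ) (hl : 4 ≤ l) (hi1 : 1 ≤ i) (hi2 : i ≤ l - 1) :
    ip (beta l i) (beta l l) = if i = l - 2 then -2 else 0 := by
  have hi : i ≠ l := by omega
  rw [beta, beta, if_neg hi, if_pos rfl]
  simp only [ip_add_left, ip_add_right, ip_smul_left, ip_smul_right]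
  rcases eq_or_ne i (l - 1) with h | h
  · rw [if_neg (by omega), h]
    have e : 2 * l - (l - 1) = l + 1 := by omega
    rw [e, ipA_eq l (l - 1) (by omega) (by omega) (by omega),
      ipA_far l (l - 1) (l + 1) (by omega) (by omega) (by omega) (by omega) (by omega)
        (by omega) (by omega),
      ipA_adj l (l - 1) l (by omega) (by omega) (by omega) (by omega) (by omega) (by omega),
      ipA_far l (l + 1) (l - 1) (by omega) (by omega) (by omega) (by omega) (by omega)
        (by omega) (by omega),
      ipA_eq l (l + 1) (by omega) (by omega) (by omega),
      ipA_adj l (l + 1) l (by omega) (by omega) (by omega) (by omega) (by omega) (by omega)]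
    norm_num
  rcases eq_or_ne i (l - 2) with h2 | h2
  · rw [if_pos h2, h2]
    have e : 2 * l - (l - 2) = l + 2 := by omega
    rw [e, ipA_adj l (l - 2) (l - 1) (by omega) (by omega) (by omega) (by omega) (by omega)
        (by omega),
      ipA_far l (l - 2) (l + 1) (by omega) (by omega) (by omega) (by omega) (by omega)
        (by omega) (by omega),
      ipA_far l (l - 2) l (by omega) (by omega) (by omega) (by omega) (by omega)
        (by omega) (by omega),
      ipA_far l (l + 2) (l - 1) (by omega) (by omega) (by omega) (by omega) (by omega)
        (by omega) (by omega),
      ipA_adj l (l + 2) (l + 1) (by omega) (by omega) (by omega) (by omega) (by omega)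
        (by omega),
      ipA_far l (l + 2) l (by omega) (by omega) (by omega) (by omega) (by omega)
        (by omega) (by omega)]
    norm_num
  · rw [if_neg h2,
      ipA_far l i (l - 1) (by omega) (by omega) (by omega) (by omega) (by omega)
        (by omega) (by omega),
      ipA_far l i (l + 1) (by omega) (by omega) (by omega) (by omega) (by omega)
        (by omega) (by omega),
      ipA_far l i l (by omega) (by omega) (by omega) (by omega) (by omega)
        (by omega) (by omega),
      ipA_far l (2 * l - i) (l - 1) (by omega) (by omega) (by omega) (by omega) (by omega)
        (by omega) (by omega),
      ipA_far l (2 * l - i) (l + 1) (by omega) (by omega) (by omega) (by omega) (by omega)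
        (by omega) (by omega),
      ipA_far l (2 * l - i) l (by omega) (by omega) (by omega) (by omega) (by omega)
        (by omega) (by omega)]
    norm_num

lemma ipB_mid_mid (l : ℕ) (hl : 4 ≤ l) : ip (beta l l) (beta l l) = 4 := by
  rw [beta, if_pos rfl]
  simp only [ip_add_left, ip_add_right, ip_smul_left, ip_smul_right]
  rw [ipA_eq l (l - 1) (by omega) (by omega) (by omega),
    ipA_far l (l - 1) (l + 1) (by omega) (by omega) (by omega) (by omega) (by omega)
      (by omega) (by omega),
    ipA_adj l (l - 1) l (by omega) (by omega) (by omega) (by omega) (by omega) (by omega),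
    ipA_far l (l + 1) (l - 1) (by omega) (by omega) (by omega) (by omega) (by omega)
      (by omega) (by omega),
    ipA_eq l (l + 1) (by omega) (by omega) (by omega),
    ipA_adj l (l + 1) l (by omega) (by omega) (by omega) (by omega) (by omega) (by omega),
    ipA_adj l l (l - 1) (by omega) (by omega) (by omega) (by omega) (by omega) (by omega),
    ipA_adj l l (l + 1) (by omega) (by omega) (by omega) (by omega) (by omega) (by omega),
    ipA_eq l l (by omega) (by omega) (by omega)]
  norm_num

/-- The vectors `β_1,…,β_l` realize the Cartan matrix of type `D_l`:
`⟨β_i,β_i⟩ = 4`, `⟨β_i,β_{i+1}⟩ = −2` for `i ≤ l−2`, `⟨β_{l−2},β_l⟩ = −2`,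
`⟨β_{l−1},β_l⟩ = 0`, and all other pairs are orthogonal. -/
theorem beta_simple_roots_type_D (l : ℕ) (hl : 4 ≤ l) :
    (∀ i, 1 ≤ i → i ≤ l → ip (beta l i) (beta l i) = 4) ∧
    (∀ i, 1 ≤ i → i ≤ l - 2 → ip (beta l i) (beta l (i + 1)) = -2) ∧
    ip (beta l (l - 2)) (beta l l) = -2 ∧
    ip (beta l (l - 1)) (beta l l) = 0 ∧
    (∀ i j, 1 ≤ i → i < j → j ≤ l → j ≠ i + 1 → ¬(i = l - 2 ∧ j = l) →
      ip (beta l i) (beta l j) = 0) := by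
  refine ⟨?_, ?_, ?_, ?_, ?_⟩
  · intro i hi1 hi2
    rcases eq_or_ne i l with h | h
    · rw [h]; exact ipB_mid_mid l hl
    · rw [ipB_small l i i hl hi1 (by omega) hi1 (by omega), if_pos rfl]
  · intro i hi1 hi2
    rw [ipB_small l i (i + 1) hl hi1 (by omega) (by omega) (by omega)]
    split_ifs <;> (first | (exfalso; omega) | norm_num)
  · rw [ipB_mid l (l - 2) hl (by omega) (by omega), if_pos rfl]
  · rw [ipB_mid l (l - 1) hl (by omega) (by omega), if_neg (by omega)]
  · intro i j hi1 hij hjl hj1 hcond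
    rcases eq_or_ne j l with h | h
    · rw [h, ipB_mid l i hl hi1 (by omega), if_neg (fun hh => hcond ⟨hh, h⟩)]
    · rw [ipB_small l i j hl hi1 (by omega) (by omega) (by omega)]
      split_ifs <;> (first | (exfalso; omega) | norm_num)
end

section
/- The dimension of the stabilizer of M_γ = E_{(l+1),1} − E_{2l,l} in the Borel subgroup B of upper-triangular invertible 2l×2l matrices acting by conjugation equals (2l−1)(l−2) + 3, hence dim B·M_γ = l(2l+1) − (2l−1)(l−2) − 3 = 6(l−1) + 1. -/
open Matrix

/-- The subspace of upper-triangular matrices commuting with a given matrix `M`. -/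
noncomputable def commTriang (n : ℕ) (M : Matrix (Fin n) (Fin n) ℂ) :
    Submodule ℂ (Matrix (Fin n) (Fin n) ℂ) where
  carrier := {x | x.BlockTriangular id ∧ x * M = M * x}
  add_mem' := by
    rintro x y ⟨hx1, hx2⟩ ⟨hy1, hy2⟩
    refine ⟨fun i j h => ?_, by rw [add_mul, mul_add, hx2, hy2]⟩
    simp [Matrix.add_apply, hx1 h, hy1 h]
  zero_mem' := ⟨fun i j h => rfl, by simp⟩
  smul_mem' := by
    rintro c x ⟨hx1, hx2⟩
    refine ⟨fun i j h => ?_, ?_⟩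
    · simp [Matrix.smul_apply, hx1 h]
    · rw [smul_mul_assoc, hx2, mul_smul_comm]

lemma mem_commTriang {n : ℕ} {M x : Matrix (Fin n) (Fin n) ℂ} :
    x ∈ commTriang n M ↔ x.BlockTriangular id ∧ x * M = M * x := Iff.rfl

def FreeP (l : ℕ) (i j : Fin (2 * l)) : Prop :=
  i ≤ j ∧ (i : ℕ) ≠ 0 ∧ (i : ℕ) ≠ l - 1 ∧ (j : ℕ) ≠ l ∧ (j : ℕ) ≠ 2 * l - 1

instance (l : ℕ) (i j : Fin (2 * l)) : Decidable (FreeP l i j) := by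
  unfold FreeP; infer_instance

abbrev TargetV (l : ℕ) :=
  ({p : Fin (2 * l) × Fin (2 * l) // FreeP l p.1 p.2} → ℂ) × ℂ × ℂ × ℂ

def phi0 (l : ℕ) (za cc : Fin (2 * l)) :
    Matrix (Fin (2 * l)) (Fin (2 * l)) ℂ →ₗ[ℂ] TargetV l where
  toFun x := (fun p => x p.1.1 p.1.2, x za za, x za cc, x cc cc)
  map_add' x y := rfl
  map_smul' c x := rfl

lemma comm_iff {n : ℕ} (aa za bb cc : Fin n) (x : Matrix (Fin n) (Fin n) ℂ) :
    x * (single aa za 1 - single bb cc 1) =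
      (single aa za 1 - single bb cc 1) * x ↔
    ∀ i j : Fin n,
      (if j = za then x i aa else 0) - (if j = cc then x i bb else 0) =
      (if i = aa then x za j else 0) - (if i = bb then x cc j else 0) := by
  rw [← Matrix.ext_iff]
  refine forall_congr' fun i => forall_congr' fun j => ?_
  rw [Matrix.mul_sub, Matrix.sub_mul, Matrix.sub_apply, Matrix.sub_apply]
  have h1 : ((x * single aa za 1 : Matrix (Fin n) (Fin n) ℂ)) i j = if j = za then x i aa else 0 := by
    by_cases h : j = za <;> simp [h]
  have h2 : ((x * single bb cc 1 : Matrix (Fin n) (Fin n) ℂ)) i j = if j = cc then x i bb else 0 := by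
    by_cases h : j = cc <;> simp [h]
  have h3 : ((single aa za 1 * x : Matrix (Fin n) (Fin n) ℂ)) i j = if i = aa then x za j else 0 := by
    by_cases h : i = aa <;> simp [h]
  have h4 : ((single bb cc 1 * x : Matrix (Fin n) (Fin n) ℂ)) i j = if i = bb then x cc j else 0 := by
    by_cases h : i = bb <;> simp [h]
  rw [h1, h2, h3, h4]

lemma key (l : ℕ) (hl : 2 ≤ l) (aa za bb cc : Fin (2 * l))
    (va : (aa : ℕ) = l) (vz : (za : ℕ) = 0) (vb : (bb : ℕ) = 2 * l - 1)
    (vc : (cc : ℕ) = l - 1) :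
    Module.finrank ℂ (commTriang (2 * l)
      (single aa za 1 - single bb cc 1)) =
      Fintype.card {p : Fin (2 * l) × Fin (2 * l) // FreeP l p.1 p.2} + 3 := by
  classical
  have hne : ∀ {p q : Fin (2 * l)}, (p : ℕ) ≠ (q : ℕ) → ¬ p = q :=
    fun h hpq => h (congrArg Fin.val hpq)
  have hzc' : ¬ za = cc := hne (by omega)
  have hcz' : ¬ cc = za := hne (by omega)
  have hab : ¬ aa = bb := hne (by omega)
  have hba : ¬ bb = aa := hne (by omega)
  have hza' : ¬ za = aa := hne (by omega)
  have haz' : ¬ aa = za := hne (by omega)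
  have hzb' : ¬ za = bb := hne (by omega)
  have hbz' : ¬ bb = za := hne (by omega)
  have hac' : ¬ aa = cc := hne (by omega)
  have hca' : ¬ cc = aa := hne (by omega)
  have hbc' : ¬ bb = cc := hne (by omega)
  have hcb' : ¬ cc = bb := hne (by omega)
  set M : Matrix (Fin (2 * l)) (Fin (2 * l)) ℂ :=
    single aa za 1 - single bb cc 1 with hM
  set Φ : commTriang (2 * l) M →ₗ[ℂ] TargetV l :=
    (phi0 l za cc).domRestrict (commTriang (2 * l) M) with hΦ
  have hinj : Function.Injective Φ := by
    rw [injective_iff_map_eq_zero]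
    rintro ⟨x, hx⟩ hx0
    have htri : x.BlockTriangular id := hx.1
    have heq := (comm_iff aa za bb cc x).1 hx.2
    have hf0 : ∀ p : {p : Fin (2 * l) × Fin (2 * l) // FreeP l p.1 p.2},
        x p.1.1 p.1.2 = 0 := fun p => congrFun (congrArg Prod.fst hx0) p
    have hz0 : x za za = 0 := congrArg (fun t => t.2.1) hx0
    have hc0 : x za cc = 0 := congrArg (fun t => t.2.2.1) hx0
    have hw0 : x cc cc = 0 := congrArg (fun t => t.2.2.2) hx0
    have hxcz : x cc za = 0 := htri (show (id za : Fin (2 * l)) < id cc from by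
      simp only [id]; exact Fin.lt_def.mpr (by omega))
    have hxba : x bb aa = 0 := htri (show (id aa : Fin (2 * l)) < id bb from by
      simp only [id]; exact Fin.lt_def.mpr (by omega))
    have c1 : ∀ i, ¬ i = aa → x i aa = 0 := by
      intro i h
      have h' := heq i za
      rw [if_pos rfl, if_neg hzc', if_neg h, hxcz, ite_self] at h'
      simpa using h'
    have c2 : x aa aa = x za za := by
      have h' := heq aa za
      rw [if_pos rfl, if_neg hzc', if_pos rfl, if_neg hab] at h'
      simpa using h'
    have c3 : ∀ i, ¬ i = aa → ¬ i = bb → x i bb = 0 := by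
      intro i hia hib
      have h' := heq i cc
      rw [if_neg hcz', if_pos rfl, if_neg hia, if_neg hib] at h'
      simpa using h'
    have c4 : x aa bb = -x za cc := by
      have h' := heq aa cc
      rw [if_neg hcz', if_pos rfl, if_pos rfl, if_neg hab] at h'
      linear_combination -h'
    have c5 : x bb bb = x cc cc := by
      have h' := heq bb cc
      rw [if_neg hcz', if_pos rfl, if_neg hba, if_pos rfl] at h'
      linear_combination -h'
    have c6 : ∀ j, ¬ j = za → ¬ j = cc → x za j = 0 := by
      intro j hjz hjc
      have h' := heq aa j
      rw [if_neg hjz, if_neg hjc, if_pos rfl, if_neg hab] at h'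
      simpa using h'.symm
    have c7 : ∀ j, ¬ j = cc → x cc j = 0 := by
      intro j hjc
      have h' := heq bb j
      rw [if_neg hjc, if_neg hba, if_pos rfl, hxba, ite_self] at h'
      simpa using h'.symm
    apply Subtype.ext
    show x = 0
    ext i j
    show x i j = 0
    by_cases hij : (j : ℕ) < (i : ℕ)
    · exact htri (show (id j : Fin (2 * l)) < id i from by
        simp only [id]; exact Fin.lt_def.mpr hij)
    by_cases hja : j = aa
    · rw [hja]
      by_cases hia : i = aa
      · rw [hia, c2]; exact hz0
      · exact c1 i hia
    by_cases hjb : j = bb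
    · rw [hjb]
      by_cases hia : i = aa
      · rw [hia, c4, hc0, neg_zero]
      by_cases hib : i = bb
      · rw [hib, c5]; exact hw0
      · exact c3 i hia hib
    by_cases hiz : i = za
    · rw [hiz]
      by_cases hjz : j = za
      · rw [hjz]; exact hz0
      by_cases hjc : j = cc
      · rw [hjc]; exact hc0
      · exact c6 j hjz hjc
    by_cases hic : i = cc
    · rw [hic]
      by_cases hjc : j = cc
      · rw [hjc]; exact hw0
      · exact c7 j hjc
    · have hfree : FreeP l i j := by
        refine ⟨Fin.le_def.mpr (by omega), ?_, ?_, ?_, ?_⟩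
        · intro h; exact hiz (Fin.ext (by omega))
        · intro h; exact hic (Fin.ext (by omega))
        · intro h; exact hja (Fin.ext (by omega))
        · intro h; exact hjb (Fin.ext (by omega))
      exact hf0 ⟨(i, j), hfree⟩
  have hsurj : Function.Surjective Φ := by
    rintro ⟨f, u, vv, w⟩
    set y : Matrix (Fin (2 * l)) (Fin (2 * l)) ℂ := fun i j =>
      if (j : ℕ) < (i : ℕ) then 0
      else if i = aa ∧ j = aa then u
      else if i = aa ∧ j = bb then -vv
      else if i = bb ∧ j = bb then w
      else if i = za ∧ j = za then u
      else if i = za ∧ j = cc then vv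
      else if i = cc ∧ j = cc then w
      else if h : FreeP l i j then f ⟨(i, j), h⟩ else 0 with hy
    have yval : ∀ i j : Fin (2 * l), y i j =
      (if (j : ℕ) < (i : ℕ) then 0
      else if i = aa ∧ j = aa then u
      else if i = aa ∧ j = bb then -vv
      else if i = bb ∧ j = bb then w
      else if i = za ∧ j = za then u
      else if i = za ∧ j = cc then vv
      else if i = cc ∧ j = cc then w
      else if h : FreeP l i j then f ⟨(i, j), h⟩ else 0) := fun i j => rfl
    have hyaa : y aa aa = u := by
      rw [yval, if_neg (by omega), if_pos ⟨rfl, rfl⟩]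
    have hyab : y aa bb = -vv := by
      rw [yval, if_neg (by omega), if_neg (fun h => hab h.2.symm),
        if_pos ⟨rfl, rfl⟩]
    have hybb : y bb bb = w := by
      rw [yval, if_neg (by omega), if_neg (fun h => hba h.1),
        if_neg (fun h => hba h.1), if_pos ⟨rfl, rfl⟩]
    have hyzz : y za za = u := by
      rw [yval, if_neg (by omega), if_neg (fun h => hza' h.1),
        if_neg (fun h => hza' h.1), if_neg (fun h => hzb' h.1), if_pos ⟨rfl, rfl⟩]
    have hyzc : y za cc = vv := by
      rw [yval, if_neg (by omega), if_neg (fun h => hza' h.1),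
        if_neg (fun h => hza' h.1), if_neg (fun h => hzb' h.1),
        if_neg (fun h => hcz' h.2), if_pos ⟨rfl, rfl⟩]
    have hycc : y cc cc = w := by
      rw [yval, if_neg (by omega), if_neg (fun h => hca' h.1),
        if_neg (fun h => hca' h.1), if_neg (fun h => hcb' h.1),
        if_neg (fun h => hcz' h.1), if_neg (fun h => hcz' h.1), if_pos ⟨rfl, rfl⟩]
    have hyfree : ∀ i j (h : FreeP l i j), y i j = f ⟨(i, j), h⟩ := by
      intro i j h
      have hle : (i : ℕ) ≤ (j : ℕ) := Fin.le_def.mp h.1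
      rw [yval, if_neg (by omega),
        if_neg (by rintro ⟨h1, rfl⟩; exact h.2.2.2.1 va),
        if_neg (by rintro ⟨h1, rfl⟩; exact h.2.2.2.2 vb),
        if_neg (by rintro ⟨h1, rfl⟩; exact h.2.2.2.2 vb),
        if_neg (by rintro ⟨rfl, h2⟩; exact h.2.1 vz),
        if_neg (by rintro ⟨rfl, h2⟩; exact h.2.1 vz),
        if_neg (by rintro ⟨rfl, h2⟩; exact h.2.2.1 vc),
        dif_pos h]
    have hlow : ∀ i j : Fin (2 * l), (j : ℕ) < (i : ℕ) → y i j = 0 := by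
      intro i j h
      rw [yval, if_pos h]
    have hA1 : ∀ i, ¬ i = aa → y i aa = 0 := by
      intro i h
      by_cases hlt : (aa : ℕ) < (i : ℕ)
      · exact hlow i aa hlt
      rw [yval, if_neg hlt, if_neg (fun hc => h hc.1), if_neg (fun hc => h hc.1),
        if_neg (fun hc => hab hc.2), if_neg (fun hc => haz' hc.2),
        if_neg (fun hc => hac' hc.2), if_neg (fun hc => hac' hc.2),
        dif_neg (fun hF => hF.2.2.2.1 va)]
    have hA2 : ∀ i, ¬ i = aa → ¬ i = bb → y i bb = 0 := by
      intro i hia hib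
      by_cases hlt : (bb : ℕ) < (i : ℕ)
      · exact hlow i bb hlt
      rw [yval, if_neg hlt, if_neg (fun hc => hia hc.1), if_neg (fun hc => hia hc.1),
        if_neg (fun hc => hib hc.1), if_neg (fun hc => hbz' hc.2),
        if_neg (fun hc => hbc' hc.2), if_neg (fun hc => hbc' hc.2),
        dif_neg (fun hF => hF.2.2.2.2 vb)]
    have hA3 : ∀ j, ¬ j = za → ¬ j = cc → y za j = 0 := by
      intro j hjz hjc
      by_cases hlt : (j : ℕ) < (za : ℕ)
      · exact hlow za j hlt
      rw [yval, if_neg hlt, if_neg (fun hc => hza' hc.1), if_neg (fun hc => hza' hc.1),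
        if_neg (fun hc => hzb' hc.1), if_neg (fun hc => hjz hc.2),
        if_neg (fun hc => hjc hc.2), if_neg (fun hc => hzc' hc.1),
        dif_neg (fun hF => hF.2.1 vz)]
    have hA4 : ∀ j, ¬ j = cc → y cc j = 0 := by
      intro j hjc
      by_cases hlt : (j : ℕ) < (cc : ℕ)
      · exact hlow cc j hlt
      rw [yval, if_neg hlt, if_neg (fun hc => hca' hc.1), if_neg (fun hc => hca' hc.1),
        if_neg (fun hc => hcb' hc.1), if_neg (fun hc => hcz' hc.1),
        if_neg (fun hc => hcz' hc.1), if_neg (fun hc => hjc hc.2),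
        dif_neg (fun hF => hF.2.2.1 vc)]
    have hytri : y.BlockTriangular id := by
      intro i j hij
      exact hlow i j (Fin.lt_def.mp hij)
    have hycomm : y * M = M * y := by
      rw [hM, comm_iff aa za bb cc y]
      intro i j
      by_cases hjz : j = za
      · rw [hjz]
        by_cases hia : i = aa
        · rw [hia, if_pos rfl, if_pos rfl, if_neg hzc', if_neg hab, hyaa, hyzz]
        by_cases hib : i = bb
        · rw [hib, if_pos rfl, if_neg hzc', if_neg hba, if_pos rfl,
            hA1 bb hba, hA4 za (fun h => hzc' h)]
        · rw [if_pos rfl, if_neg hzc', if_neg hia, if_neg hib, hA1 i hia]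
      by_cases hjc : j = cc
      · rw [hjc]
        by_cases hia : i = aa
        · rw [hia, if_neg hcz', if_pos rfl, if_pos rfl, if_neg hab, hyab, hyzc]
          ring
        by_cases hib : i = bb
        · rw [hib, if_neg hcz', if_pos rfl, if_neg hba, if_pos rfl, hybb, hycc]
        · rw [if_neg hcz', if_pos rfl, if_neg hia, if_neg hib, hA2 i hia hib]
      by_cases hia : i = aa
      · rw [hia, if_neg hjz, if_neg hjc, if_pos rfl, if_neg hab, hA3 j hjz hjc]
      by_cases hib : i = bb
      · rw [hib, if_neg hjz, if_neg hjc, if_neg hba, if_pos rfl, hA4 j hjc]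
      · rw [if_neg hjz, if_neg hjc, if_neg hia, if_neg hib]
    have hymem : y ∈ commTriang (2 * l) M := ⟨hytri, hycomm⟩
    refine ⟨⟨y, hymem⟩, ?_⟩
    have e1 : (Φ ⟨y, hymem⟩).1 = f := funext fun p => hyfree p.1.1 p.1.2 p.2
    have e2 : (Φ ⟨y, hymem⟩).2.1 = u := hyzz
    have e3 : (Φ ⟨y, hymem⟩).2.2.1 = vv := hyzc
    have e4 : (Φ ⟨y, hymem⟩).2.2.2 = w := hycc
    exact Prod.ext e1 (Prod.ext e2 (Prod.ext e3 e4))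
  have equiv := LinearEquiv.ofBijective Φ ⟨hinj, hsurj⟩
  rw [equiv.finrank_eq, Module.finrank_prod, Module.finrank_prod,
    Module.finrank_prod, Module.finrank_fintype_fun_eq_card, Module.finrank_self]


lemma gauss_sub (c : ℕ) : ∀ m : ℕ, m ≤ c + 1 →
    2 * (∑ k ∈ Finset.range m, (c - k)) + m * m = 2 * m * c + m := by
  intro m
  induction m with
  | zero => simp
  | succ m ih =>
    intro hm
    obtain ⟨d, rfl⟩ : ∃ d, c = m + d := ⟨c - m, by omega⟩
    have ihm := ih (by omega)
    rw [Finset.sum_range_succ]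
    have h1 : m + d - m = d := by omega
    rw [h1]
    zify at ihm ⊢
    linear_combination ihm

-- row count
lemma row_count (l : ℕ) (hl : 2 ≤ l) (i : Fin (2 * l)) :
    Fintype.card {j : Fin (2 * l) // FreeP l i j} =
      (if (i : ℕ) = 0 ∨ (i : ℕ) = l - 1 then 0
       else if (i : ℕ) ≤ l then 2 * l - i - 2 else 2 * l - i - 1) := by
  rw [Fintype.card_subtype]
  by_cases h0 : (i : ℕ) = 0 ∨ (i : ℕ) = l - 1
  · rw [if_pos h0, Finset.card_eq_zero, Finset.filter_false_of_mem]
    intro j _ hj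
    exact absurd h0 (by push_neg; exact ⟨hj.2.1, hj.2.2.1⟩)
  · rw [if_neg h0]
    push_neg at h0
    set aa : Fin (2 * l) := ⟨l, by omega⟩
    set bb : Fin (2 * l) := ⟨2 * l - 1, by omega⟩
    by_cases hi : (i : ℕ) ≤ l
    · rw [if_pos hi]
      have : Finset.filter (fun j => FreeP l i j) Finset.univ = Finset.Ici i \ {aa, bb} := by
        ext j
        rw [Finset.mem_filter]
        simp only [Finset.mem_filter, Finset.mem_univ, true_and, Finset.mem_sdiff,
          Finset.mem_Ici, Finset.mem_insert, Finset.mem_singleton, FreeP, Fin.ext_iff]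
        constructor
        · rintro ⟨h1, _, _, h4, h5⟩; exact ⟨h1, by push_neg; exact ⟨h4, h5⟩⟩
        · rintro ⟨h1, h2⟩; push_neg at h2
          exact ⟨h1, h0.1, h0.2, h2.1, h2.2⟩
      rw [this, Finset.card_sdiff_of_subset, Fin.card_Ici]
      · rw [Finset.card_insert_of_notMem (s := {bb}) (a := aa) (by simp [aa, bb, Fin.ext_iff]; omega),
          Finset.card_singleton]
      · intro j hj
        simp only [Finset.mem_insert, Finset.mem_singleton] at hj
        rcases hj with rfl | rfl <;> simp only [aa, bb, Finset.mem_Ici, Fin.le_def] <;> omega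
    · rw [if_neg hi]
      push_neg at hi
      have : Finset.filter (fun j => FreeP l i j) Finset.univ = Finset.Ici i \ {bb} := by
        ext j
        rw [Finset.mem_filter]
        simp only [Finset.mem_filter, Finset.mem_univ, true_and, Finset.mem_sdiff,
          Finset.mem_Ici, Finset.mem_singleton, FreeP, Fin.ext_iff]
        constructor
        · rintro ⟨h1, _, _, _, h5⟩; exact ⟨h1, h5⟩
        · rintro ⟨h1, h2⟩
          have hij : (i : ℕ) ≤ (j : ℕ) := h1
          exact ⟨h1, h0.1, h0.2, by omega, h2⟩
      rw [this, Finset.card_sdiff_of_subset (s := {bb}) (t := Finset.Ici i) (by simp only [bb, Finset.singleton_subset_iff, Finset.mem_Ici, Fin.le_def]; omega),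
        Fin.card_Ici, Finset.card_singleton]

lemma card_free (l : ℕ) (hl : 2 ≤ l) :
    Fintype.card {p : Fin (2 * l) × Fin (2 * l) // FreeP l p.1 p.2} =
      (2 * l - 1) * (l - 2) := by
  rw [Fintype.card_congr (Equiv.subtypeProdEquivSigmaSubtype (FreeP l)), Fintype.card_sigma]
  have hrc : ∀ i : Fin (2 * l), Fintype.card {j : Fin (2 * l) // FreeP l i j} =
      (fun k : ℕ => if k = 0 ∨ k = l - 1 then 0
       else if k ≤ l then 2 * l - k - 2 else 2 * l - k - 1) i :=
    fun i => row_count l hl i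
  set F : ℕ → ℕ := fun k => if k = 0 ∨ k = l - 1 then 0
       else if k ≤ l then 2 * l - k - 2 else 2 * l - k - 1 with hF
  rw [Finset.sum_congr rfl (fun i _ => hrc i), Fin.sum_univ_eq_sum_range F (2 * l)]
  -- split range
  rw [Finset.range_eq_Ico,
    ← Finset.sum_Ico_consecutive F (by omega : 0 ≤ l + 1) (by omega : l + 1 ≤ 2 * l),
    ← Finset.sum_Ico_consecutive F (by omega : 0 ≤ l) (by omega : l ≤ l + 1),
    ← Finset.sum_Ico_consecutive F (by omega : 0 ≤ l - 1) (by omega : l - 1 ≤ l),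
    ← Finset.sum_Ico_consecutive F (by omega : 0 ≤ 1) (by omega : 1 ≤ l - 1)]
  have e1 : ∑ i ∈ Finset.Ico 0 1, F i = 0 := by
    simp [hF]
  have e3 : ∑ i ∈ Finset.Ico (l - 1) l, F i = 0 := by
    have : Finset.Ico (l - 1) l = {l - 1} := by
      ext x; simp only [Finset.mem_Ico, Finset.mem_singleton]; omega
    simp [this, hF]
  have e4 : ∑ i ∈ Finset.Ico l (l + 1), F i = l - 2 := by
    have : Finset.Ico l (l + 1) = {l} := by
      ext x; simp only [Finset.mem_Ico, Finset.mem_singleton]; omega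
    simp only [this, Finset.sum_singleton, hF]
    rw [if_neg (by omega), if_pos (by omega)]
    omega
  -- piece 2
  have e2 : 2 * (∑ i ∈ Finset.Ico 1 (l - 1), F i) + (l - 2) * (l - 2)
      = 2 * (l - 2) * (2 * l - 3) + (l - 2) := by
    have hcongr : ∑ i ∈ Finset.Ico 1 (l - 1), F i
        = ∑ k ∈ Finset.range (l - 2), (2 * l - 3 - k) := by
      rw [Finset.sum_Ico_eq_sum_range]
      have : l - 1 - 1 = l - 2 := by omega
      rw [this]
      refine Finset.sum_congr rfl fun k hk => ?_
      rw [Finset.mem_range] at hk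
      simp only [hF]
      rw [if_neg (by omega), if_pos (by omega)]
      omega
    rw [hcongr]
    exact gauss_sub (2 * l - 3) (l - 2) (by omega)
  have e5 : 2 * (∑ i ∈ Finset.Ico (l + 1) (2 * l), F i) + (l - 1) * (l - 1)
      = 2 * (l - 1) * (l - 2) + (l - 1) := by
    have hcongr : ∑ i ∈ Finset.Ico (l + 1) (2 * l), F i
        = ∑ k ∈ Finset.range (l - 1), (l - 2 - k) := by
      rw [Finset.sum_Ico_eq_sum_range]
      have : 2 * l - (l + 1) = l - 1 := by omega
      rw [this]
      refine Finset.sum_congr rfl fun k hk => ?_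
      rw [Finset.mem_range] at hk
      simp only [hF]
      rw [if_neg (by omega), if_neg (by omega)]
      omega
    rw [hcongr]
    exact gauss_sub (l - 2) (l - 1) (by omega)
  rw [e1, e3, e4]
  -- final arithmetic
  obtain ⟨m, rfl⟩ : ∃ m, l = m + 2 := ⟨l - 2, by omega⟩
  have hm2 : m + 2 - 2 = m := by omega
  have hm1 : m + 2 - 1 = m + 1 := by omega
  have hm3 : 2 * (m + 2) - 3 = 2 * m + 1 := by omega
  have hm4 : 2 * (m + 2) - 1 = 2 * m + 3 := by omega
  rw [hm2, hm1, hm3] at e2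
  rw [hm2, hm1] at e5
  rw [hm2, hm1, hm4]
  have q1 : 2 * (m + 2) - 3 = 2 * m + 1 := by omega
  have h2 : 2 * m * (2 * m + 1) = 4 * (m * m) + 2 * m := by ring
  have h5 : 2 * (m + 1) * m = 2 * (m * m) + 2 * m := by ring
  have h6 : (m + 1) * (m + 1) = m * m + 2 * m + 1 := by ring
  have h7 : (2 * m + 3) * m = 2 * (m * m) + 3 * m := by ring
  rw [h2] at e2
  rw [h5, h6] at e5
  rw [h7]
  generalize m * m = q at e2 e5 ⊢
  omega

theorem finrank_commTriang (l : ℕ) (hl : 2 ≤ l) :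
    Module.finrank ℂ (commTriang (2 * l)
      (single ⟨l, by have := hl; omega⟩ ⟨0, by have := hl; omega⟩ 1 -
        single ⟨2 * l - 1, by have := hl; omega⟩ ⟨l - 1, by have := hl; omega⟩ 1)) =
      (2 * l - 1) * (l - 2) + 3 := by
  rw [key l hl _ _ _ _ rfl rfl rfl rfl, card_free l hl]

/-- The stabilizer of `M_γ = E_{l+1,1} − E_{2l,l}` in the Borel of upper-triangular
invertible `2l×2l` matrices (equivalently, its Lie algebra of upper-triangular
matrices commuting with `M_γ`) has dimension `(2l−1)(l−2)+3`; hence, since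
`dim B = l(2l+1)`, the orbit `B·M_γ` has dimension `6(l−1)+1`. -/
theorem dim_stab_Mgamma (l : ℕ) (hl : 2 ≤ l) :
    let M : Matrix (Fin (2 * l)) (Fin (2 * l)) ℂ :=
      single ⟨l, by omega⟩ ⟨0, by omega⟩ 1 -
        single ⟨2 * l - 1, by omega⟩ ⟨l - 1, by omega⟩ 1
    Module.finrank ℂ (commTriang (2 * l) M) = (2 * l - 1) * (l - 2) + 3 ∧
      l * (2 * l + 1) - ((2 * l - 1) * (l - 2) + 3) = 6 * (l - 1) + 1 := by
  intro M
  refine ⟨finrank_commTriang l hl, ?_⟩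
  obtain ⟨m, rfl⟩ : ∃ m, l = m + 2 := ⟨l - 2, by omega⟩
  have h1 : 2 * (m + 2) - 1 = 2 * m + 3 := by omega
  have h2 : m + 2 - 2 = m := by omega
  rw [h1, h2]
  have h3 : (m + 2) * (2 * (m + 2) + 1) = 2 * (m * m) + 9 * m + 10 := by ring
  have h4 : (2 * m + 3) * m = 2 * (m * m) + 3 * m := by ring
  rw [h3, h4]
  generalize m * m = q
  omega
end
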